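/- Let b : ℝ^d → ℝ^d be a smooth compactly supported vector field and V : ℝ^d → ℝ smooth. Define X_i b_j = (1/2)(∂_i V) b_j + ∂_i b_j. Then ∑_{i,j=1}^d ∫ (X_i b_j)(X_j b_i) dx = ∫ |(1/2)(∇V)·b − ∇·b|² dx − ∫ ⟨b, (∇²V) b⟩ dx. -/

import Mathlib

open MeasureTheory Real

/-- Partial derivative `∂_i f` on `ℝ^d`. -/
noncomputable def pd {d : ℕ} (f : (Fin d → ℝ) → ℝ) (i : Fin d) (x : Fin d → ℝ) : ℝ :=
  fderiv ℝ f x (Pi.single i 1)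

variable {d : ℕ}

lemma contDiff_pd {f : (Fin d → ℝ) → ℝ} (hf : ContDiff ℝ (⊤ : ℕ∞) f) (i : Fin d) :
    ContDiff ℝ (⊤ : ℕ∞) (pd f i) :=
  (hf.fderiv_right (m := (⊤ : ℕ∞)) (by simp)).clm_apply contDiff_const

lemma hcs_pd {f : (Fin d → ℝ) → ℝ} (hf : HasCompactSupport f) (i : Fin d) :
    HasCompactSupport (pd f i) :=
  (hf.fderiv ℝ).comp_left (g := fun L : (Fin d → ℝ) →L[ℝ] ℝ => L (Pi.single i 1)) rfl

lemma pd_mul {f g : (Fin d → ℝ) → ℝ} (hf : ContDiff ℝ (⊤ : ℕ∞) f) (hg : ContDiff ℝ (⊤ : ℕ∞) g)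
    (i : Fin d) (x : Fin d → ℝ) :
    pd (fun y => f y * g y) i x = pd f i x * g x + f x * pd g i x := by
  unfold pd
  rw [fderiv_fun_mul (hf.differentiable (by simp) x) (hg.differentiable (by simp) x)]
  simp; ring

lemma pd_comm {f : (Fin d → ℝ) → ℝ} (hf : ContDiff ℝ (⊤ : ℕ∞) f) (i j : Fin d) (x : Fin d → ℝ) :
    pd (pd f i) j x = pd (pd f j) i x := by
  have hsym := (hf.contDiffAt (x := x)).isSymmSndFDerivAt (by rw [minSmoothness_of_isRCLikeNormedField]; exact WithTop.coe_le_coe.mpr le_top)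
  have hd : DifferentiableAt ℝ (fderiv ℝ f) x :=
    ((hf.fderiv_right (m := (⊤ : ℕ∞)) (by simp)).differentiable (by simp)) x
  have h1 : ∀ k l : Fin d, pd (pd f k) l x
      = fderiv ℝ (fderiv ℝ f) x (Pi.single l 1) (Pi.single k 1) := by
    intro k l
    unfold pd
    rw [fderiv_clm_apply hd (differentiableAt_const _)]
    simp
  rw [h1, h1, hsym]

lemma itm {f g : (Fin d → ℝ) → ℝ} (hf : Continuous f) (hg : Continuous g)
    (h : HasCompactSupport g) : Integrable (fun x => f x * g x) :=
  (hf.mul hg).integrable_of_hasCompactSupport h.mul_left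

lemma ibp {f g : (Fin d → ℝ) → ℝ} (hf : ContDiff ℝ (⊤ : ℕ∞) f) (hg : ContDiff ℝ (⊤ : ℕ∞) g)
    (hgc : HasCompactSupport g) (i : Fin d) :
    ∫ x, f x * pd g i x = - ∫ x, pd f i x * g x := by
  apply integral_mul_fderiv_eq_neg_fderiv_mul_of_integrable
  · exact itm (contDiff_pd hf i).continuous hg.continuous hgc
  · exact itm hf.continuous (contDiff_pd hg i).continuous (hcs_pd hgc i)
  · exact itm hf.continuous hg.continuous hgc
  · exact fun x _ => hf.differentiable (by simp) x
  · exact fun x _ => hg.differentiable (by simp) x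

lemma icongr {f g : (Fin d → ℝ) → ℝ} (h : ∀ x, f x = g x) : ∫ x, f x = ∫ x, g x :=
  congrArg (integral volume) (funext h)

lemma isplit4 {f1 f2 f3 f4 : (Fin d → ℝ) → ℝ} (h1 : Integrable f1) (h2 : Integrable f2)
    (h3 : Integrable f3) (h4 : Integrable f4) :
    ∫ x, (f1 x + f2 x + f3 x + f4 x)
      = (∫ x, f1 x) + (∫ x, f2 x) + (∫ x, f3 x) + ∫ x, f4 x := by
  rw [integral_add (f := fun x => f1 x + f2 x + f3 x) ((h1.add h2).add h3) h4,
    integral_add (f := fun x => f1 x + f2 x) (h1.add h2) h3, integral_add h1 h2]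

lemma key (V : (Fin d → ℝ) → ℝ) (hV : ContDiff ℝ (⊤ : ℕ∞) V)
    (b : Fin d → (Fin d → ℝ) → ℝ) (hb : ∀ i, ContDiff ℝ (⊤ : ℕ∞) (b i))
    (hbc : ∀ i, HasCompactSupport (b i)) (i j : Fin d) :
    (∫ x, ((1 / 2) * pd V i x * b j x + pd (b j) i x) *
        ((1 / 2) * pd V j x * b i x + pd (b i) j x)) =
      (∫ x, ((1 / 2) * (pd V i x * b i x) - pd (b i) i x) *
        ((1 / 2) * (pd V j x * b j x) - pd (b j) j x))
        - ∫ x, pd (pd V j) i x * b i x * b j x := by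
  have cV : ∀ k, Continuous (pd V k) := fun k => (contDiff_pd hV k).continuous
  have cW : Continuous (pd (pd V j) i) := (contDiff_pd (contDiff_pd hV j) i).continuous
  have cb : ∀ k, Continuous (b k) := fun k => (hb k).continuous
  have cD : ∀ k l, Continuous (pd (b k) l) := fun k l => (contDiff_pd (hb k) l).continuous
  have I1 : Integrable (fun x => pd V i x * b i x * (pd V j x * b j x)) :=
    itm ((cV i).mul (cb i)) ((cV j).mul (cb j)) ((hbc j).mul_left)
  have I2 : Integrable (fun x => pd V i x * pd (b i) j x * b j x) :=
    itm ((cV i).mul (cD i j)) (cb j) (hbc j)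
  have I3 : Integrable (fun x => pd V j x * pd (b j) i x * b i x) :=
    itm ((cV j).mul (cD j i)) (cb i) (hbc i)
  have I4 : Integrable (fun x => pd (b j) i x * pd (b i) j x) :=
    itm (cD j i) (cD i j) (hcs_pd (hbc i) j)
  have I5 : Integrable (fun x => pd V i x * b i x * pd (b j) j x) :=
    itm ((cV i).mul (cb i)) (cD j j) (hcs_pd (hbc j) j)
  have I6 : Integrable (fun x => pd V j x * b j x * pd (b i) i x) :=
    itm ((cV j).mul (cb j)) (cD i i) (hcs_pd (hbc i) i)
  have I7 : Integrable (fun x => pd (b i) i x * pd (b j) j x) :=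
    itm (cD i i) (cD j j) (hcs_pd (hbc j) j)
  have IH : Integrable (fun x => pd (pd V j) i x * b i x * b j x) :=
    itm (cW.mul (cb i)) (cb j) (hbc j)
  -- E1 : expansion of the LHS
  have E1 : (∫ x, ((1 / 2) * pd V i x * b j x + pd (b j) i x) *
        ((1 / 2) * pd V j x * b i x + pd (b i) j x))
      = (1/4) * (∫ x, pd V i x * b i x * (pd V j x * b j x))
        + ((1/2) * (∫ x, pd V i x * pd (b i) j x * b j x)
        + ((1/2) * (∫ x, pd V j x * pd (b j) i x * b i x)
        + ∫ x, pd (b j) i x * pd (b i) j x)) := by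
    rw [icongr (g := fun x => (1/4) * (pd V i x * b i x * (pd V j x * b j x))
        + (1/2) * (pd V i x * pd (b i) j x * b j x)
        + (1/2) * (pd V j x * pd (b j) i x * b i x)
        + pd (b j) i x * pd (b i) j x) (fun x => by ring)]
    rw [isplit4 (I1.const_mul _) (I2.const_mul _) (I3.const_mul _) I4,
      integral_const_mul, integral_const_mul, integral_const_mul]
    ring
  -- E2 : expansion of the product term
  have E2 : (∫ x, ((1 / 2) * (pd V i x * b i x) - pd (b i) i x) *
        ((1 / 2) * (pd V j x * b j x) - pd (b j) j x))
      = (1/4) * (∫ x, pd V i x * b i x * (pd V j x * b j x))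
        - ((1/2) * (∫ x, pd V i x * b i x * pd (b j) j x)
        + ((1/2) * (∫ x, pd V j x * b j x * pd (b i) i x)
        - ∫ x, pd (b i) i x * pd (b j) j x)) := by
    rw [icongr (g := fun x => (1/4) * (pd V i x * b i x * (pd V j x * b j x))
        + (-(1/2)) * (pd V i x * b i x * pd (b j) j x)
        + (-(1/2)) * (pd V j x * b j x * pd (b i) i x)
        + pd (b i) i x * pd (b j) j x) (fun x => by ring)]
    rw [isplit4 (I1.const_mul _) (I5.const_mul _) (I6.const_mul _) I7,
      integral_const_mul, integral_const_mul, integral_const_mul]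
    ring
  -- E3 : integration by parts  ∫ ∂ᵢV bᵢ ∂ⱼbⱼ = -∫ ∂ᵢ∂ⱼV bᵢ bⱼ - ∫ ∂ᵢV ∂ⱼbᵢ bⱼ
  have E3 : (∫ x, pd V i x * b i x * pd (b j) j x)
      = -((∫ x, pd (pd V j) i x * b i x * b j x)
          + ∫ x, pd V i x * pd (b i) j x * b j x) := by
    have h := ibp (f := fun x => pd V i x * b i x) ((contDiff_pd hV i).mul (hb i)) (hb j)
      (hbc j) j
    rw [h, icongr (g := fun x => pd (pd V j) i x * b i x * b j x
        + pd V i x * pd (b i) j x * b j x) (fun x => by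
      rw [pd_mul (contDiff_pd hV i) (hb i) j x, pd_comm hV i j x]; ring),
      integral_add IH I2]
  -- E3' : symmetric version
  have E3' : (∫ x, pd V j x * b j x * pd (b i) i x)
      = -((∫ x, pd (pd V j) i x * b i x * b j x)
          + ∫ x, pd V j x * pd (b j) i x * b i x) := by
    have h := ibp (f := fun x => pd V j x * b j x) ((contDiff_pd hV j).mul (hb j)) (hb i)
      (hbc i) i
    rw [h, icongr (g := fun x => pd (pd V j) i x * b i x * b j x
        + pd V j x * pd (b j) i x * b i x) (fun x => by
      rw [pd_mul (contDiff_pd hV j) (hb j) i x]; ring),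
      integral_add IH I3]
  -- E4 : ∫ ∂ᵢbⱼ ∂ⱼbᵢ = ∫ ∂ᵢbᵢ ∂ⱼbⱼ
  have E4 : (∫ x, pd (b j) i x * pd (b i) j x) = ∫ x, pd (b i) i x * pd (b j) j x := by
    have h1 := ibp (f := pd (b j) i) (contDiff_pd (hb j) i) (hb i) (hbc i) j
    have h2 := ibp (f := pd (b j) j) (contDiff_pd (hb j) j) (hb i) (hbc i) i
    rw [h1, icongr (g := fun x => pd (pd (b j) j) i x * b i x)
        (fun x => by rw [pd_comm (hb j) i j x]), ← h2]
    exact icongr fun x => by ring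
  linarith [E1, E2, E3, E3', E4]


/-- `∑_{ij} ∫ (X_i b_j)(X_j b_i) = ∫ |(1/2)∇V·b − ∇·b|² − ∫ ⟨b, (∇²V) b⟩`,
where `X_i f = (1/2)(∂_i V) f + ∂_i f`. -/
theorem stmt2 {d : ℕ} (V : (Fin d → ℝ) → ℝ) (hV : ContDiff ℝ (⊤ : ℕ∞) V)
    (b : Fin d → (Fin d → ℝ) → ℝ) (hb : ∀ i, ContDiff ℝ (⊤ : ℕ∞) (b i))
    (hbc : ∀ i, HasCompactSupport (b i)) :
    (∑ i, ∑ j, ∫ x, ((1 / 2) * pd V i x * b j x + pd (b j) i x) *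
        ((1 / 2) * pd V j x * b i x + pd (b i) j x)) =
      (∫ x, ((1 / 2) * (∑ i, pd V i x * b i x) - ∑ i, pd (b i) i x) ^ 2) -
        ∫ x, ∑ i, ∑ j, pd (pd V j) i x * b i x * b j x := by
  have cV : ∀ k, Continuous (pd V k) := fun k => (contDiff_pd hV k).continuous
  have cb : ∀ k, Continuous (b k) := fun k => (hb k).continuous
  have cD : ∀ k l, Continuous (pd (b k) l) := fun k l => (contDiff_pd (hb k) l).continuous
  have HInt : ∀ (i j : Fin d), Integrable (fun x => pd (pd V j) i x * b i x * b j x) :=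
    fun i j => itm ((contDiff_pd (contDiff_pd hV j) i).continuous.mul (cb i)) (cb j) (hbc j)
  have PInt : ∀ (i j : Fin d), Integrable (fun x =>
      ((1 / 2) * (pd V i x * b i x) - pd (b i) i x) *
      ((1 / 2) * (pd V j x * b j x) - pd (b j) j x)) := by
    intro i j
    refine itm ?_ ?_ ?_
    · exact (continuous_const.mul ((cV i).mul (cb i))).sub (cD i i)
    · exact (continuous_const.mul ((cV j).mul (cb j))).sub (cD j j)
    · exact HasCompactSupport.comp₂_left ((hbc j).mul_left.mul_left) (hcs_pd (hbc j) j) (sub_zero 0)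
  have hH : (∫ x, ∑ i, ∑ j, pd (pd V j) i x * b i x * b j x)
      = ∑ i, ∑ j, ∫ x, pd (pd V j) i x * b i x * b j x := by
    rw [integral_finset_sum _ (fun i _ => integrable_finset_sum _ (fun j _ => HInt i j))]
    exact Finset.sum_congr rfl fun i _ => integral_finset_sum _ (fun j _ => HInt i j)
  have hP : (∫ x, ((1 / 2) * (∑ i, pd V i x * b i x) - ∑ i, pd (b i) i x) ^ 2)
      = ∑ i, ∑ j, ∫ x, ((1 / 2) * (pd V i x * b i x) - pd (b i) i x) *
          ((1 / 2) * (pd V j x * b j x) - pd (b j) j x) := by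
    rw [icongr (g := fun x => ∑ i, ∑ j,
        ((1 / 2) * (pd V i x * b i x) - pd (b i) i x) *
        ((1 / 2) * (pd V j x * b j x) - pd (b j) j x)) (fun x => by
      rw [Finset.mul_sum, ← Finset.sum_sub_distrib, sq, Finset.sum_mul_sum])]
    rw [integral_finset_sum _ (fun i _ => integrable_finset_sum _ (fun j _ => PInt i j))]
    exact Finset.sum_congr rfl fun i _ => integral_finset_sum _ (fun j _ => PInt i j)
  rw [hH, hP, ← Finset.sum_sub_distrib]
  refine Finset.sum_congr rfl fun i _ => ?_
  rw [← Finset.sum_sub_distrib]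
  exact Finset.sum_congr rfl fun j _ => key V hV b hb hbc i j
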